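/- arXiv:1605.03241 — 5 statements merged into one kernel-verified Lean document; each statement's English description precedes it below -/
import Mathlib

section
/- For all real numbers k with 0 < k < 1 and x with 0 ≤ x < 1, and α > 0, the Poisson growth rate g_P = α(k - x)/(1 - k) is greater than or equal to the Bernoulli growth rate g_B = α(((√(1 + 4k(1-k)) - 1)/(2(1-k)))(1 - x) - x). -/
/-! Both rates are affine and increasing in the per-node growth factor: the Poisson factor is
`k / (1 - k)`, the Bernoulli one the positive root of `(1 - k) r ^ 2 + r - k = 0`. Since
`1 + 4k(1 - k) ≤ (1 + 2k) ^ 2`, that root is at most `k / (1 - k)`. -/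

lemma sqrt_one_add_four_mul_mul_one_sub_le {k : ℝ} (hk : 0 ≤ k) :
    Real.sqrt (1 + 4 * k * (1 - k)) ≤ 1 + 2 * k :=
  Real.sqrt_le_iff.mpr ⟨by linarith, by nlinarith⟩

lemma bernoulli_factor_le_poisson_factor {k : ℝ} (hk0 : 0 ≤ k) (hk1 : k < 1) :
    (Real.sqrt (1 + 4 * k * (1 - k)) - 1) / (2 * (1 - k)) ≤ k / (1 - k) := by
  have hs := sqrt_one_add_four_mul_mul_one_sub_le hk0
  rw [div_le_div_iff₀ (by linarith) (by linarith)]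
  nlinarith

theorem gP_ge_gB_general (k x α : ℝ) (hk0 : 0 < k) (hk1 : k < 1)
    (hx1 : x < 1) (hα : 0 < α) :
    α * (k - x) / (1 - k) ≥
      α * ((Real.sqrt (1 + 4 * k * (1 - k)) - 1) / (2 * (1 - k)) * (1 - x) - x) := by
  have hr := bernoulli_factor_le_poisson_factor hk0.le hk1
  have h1k : 1 - k ≠ 0 := by linarith
  calc α * ((Real.sqrt (1 + 4 * k * (1 - k)) - 1) / (2 * (1 - k)) * (1 - x) - x)
      ≤ α * (k / (1 - k) * (1 - x) - x) := by
        gcongr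
    _ = α * (k - x) / (1 - k) := by
        field_simp
        ring

/-- Poisson FRS growth rate dominates Bernoulli FRS growth rate. -/
theorem gP_ge_gB (k x α : ℝ) (hk0 : 0 < k) (hk1 : k < 1)
    (hx0 : 0 ≤ x) (hx1 : x < 1) (hα : 0 < α) :
    α * (k - x) / (1 - k) ≥
      α * ((Real.sqrt (1 + 4 * k * (1 - k)) - 1) / (2 * (1 - k)) * (1 - x) - x) :=
  gP_ge_gB_general k x α hk0 hk1 hx1 hα
end

section
/- Let 0 < k < 1, 0 ≤ x < 1, α > 0. Define g_B = α(((√(1+4k(1-k)) - 1)/(2(1-k)))(1-x) - x) and a_B = 1 - x(1 - kx)/(k(1-x)²). Then a_B ≤ 0 if and only if g_B ≤ 0. -/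
/-!
Both conditions say that the quadratic `k - (2k + 1)x + 2kx²` is nonpositive: for `a_B` after
clearing the positive denominator `k(1 - x)²`, for `g_B` after rewriting it as
`√(1 + 4k(1 - k)) (1 - x) ≤ 1 + (1 - 2k)x` and squaring, both sides being nonnegative.
-/

lemma one_sub_div_nonpos_iff_quadratic_nonpos {k x : ℝ} (hk : 0 < k) (hx : x ≠ 1) :
    1 - x * (1 - k * x) / (k * (1 - x) ^ 2) ≤ 0 ↔ k - (2 * k + 1) * x + 2 * k * x ^ 2 ≤ 0 := by
  have hden : 0 < k * (1 - x) ^ 2 := by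
    have : 1 - x ≠ 0 := sub_ne_zero.mpr hx.symm
    positivity
  have hdiff : x * (1 - k * x) - k * (1 - x) ^ 2 = -(k - (2 * k + 1) * x + 2 * k * x ^ 2) := by
    ring
  rw [sub_nonpos, one_le_div hden, ← sub_nonneg, hdiff, neg_nonneg]

lemma mul_div_mul_sub_nonpos_iff {k x s α : ℝ} (hk : k < 1) (hα : 0 < α) :
    α * ((s - 1) / (2 * (1 - k)) * (1 - x) - x) ≤ 0 ↔ s * (1 - x) ≤ 1 + (1 - 2 * k) * x := by
  rw [← neg_nonneg, ← mul_neg, mul_nonneg_iff_of_pos_left hα, neg_nonneg, sub_nonpos,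
    div_mul_eq_mul_div, div_le_iff₀ (by linarith)]
  constructor <;> intro h <;> linarith

lemma sqrt_mul_le_iff_quadratic_nonpos {k x : ℝ} (hk0 : 0 ≤ k) (hk1 : k < 1) (hx0 : 0 ≤ x)
    (hx1 : x ≤ 1) :
    √(1 + 4 * k * (1 - k)) * (1 - x) ≤ 1 + (1 - 2 * k) * x ↔
      k - (2 * k + 1) * x + 2 * k * x ^ 2 ≤ 0 := by
  have hsq : √(1 + 4 * k * (1 - k)) ^ 2 = 1 + 4 * k * (1 - k) := Real.sq_sqrt (by nlinarith)
  have hlhs : 0 ≤ √(1 + 4 * k * (1 - k)) * (1 - x) := by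
    have : 0 ≤ 1 - x := by linarith
    positivity
  have hrhs : 0 ≤ 1 + (1 - 2 * k) * x := by nlinarith
  have hdiff : (1 + (1 - 2 * k) * x) ^ 2 - (√(1 + 4 * k * (1 - k)) * (1 - x)) ^ 2
      = 4 * (1 - k) * -(k - (2 * k + 1) * x + 2 * k * x ^ 2) := by
    rw [mul_pow, hsq]; ring
  rw [← pow_le_pow_iff_left₀ hlhs hrhs two_ne_zero, ← sub_nonneg, hdiff,
    mul_nonneg_iff_of_pos_left (by linarith), neg_nonneg]

/-- the Bernoulli equilibrium prevalence is nonpositive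
iff the Bernoulli growth rate is nonpositive. -/
theorem aB_nonpos_iff_gB_nonpos (k x α : ℝ) (hk0 : 0 < k) (hk1 : k < 1)
    (hx0 : 0 ≤ x) (hx1 : x < 1) (hα : 0 < α) :
    1 - x * (1 - k * x) / (k * (1 - x) ^ 2) ≤ 0 ↔
      α * ((Real.sqrt (1 + 4 * k * (1 - k)) - 1) / (2 * (1 - k)) * (1 - x) - x) ≤ 0 := by
  rw [one_sub_div_nonpos_iff_quadratic_nonpos hk0 hx1.ne, mul_div_mul_sub_nonpos_iff hk1 hα,
    sqrt_mul_le_iff_quadratic_nonpos hk0.le hk1 hx0 hx1.le]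
end

section
/- For 0 < k < 1 and 0 ≤ x ≤ 1/2, the Poisson equilibrium prevalence a_P = (k - x)/(k(1 - x)) is greater than or equal to the Bernoulli equilibrium prevalence a_B = 1 - x(1 - kx)/(k(1 - x)²). -/
theorem prevalence_poisson_sub_bernoulli_eq {k x : ℝ} (hk : k ≠ 0) (hx : x ≠ 1) :
    (k - x) / (k * (1 - x)) - (1 - x * (1 - k * x) / (k * (1 - x) ^ 2))
      = x * (k * (1 - 2 * x) + x) / (k * (1 - x) ^ 2) := by
  have h1x : 1 - x ≠ 0 := sub_ne_zero.mpr (Ne.symm hx)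
  field_simp
  ring

theorem aP_ge_aB_general (k x : ℝ) (hk0 : 0 < k)
    (hx0 : 0 ≤ x) (hx1 : x ≤ 1 / 2) :
    (k - x) / (k * (1 - x)) ≥ 1 - x * (1 - k * x) / (k * (1 - x) ^ 2) := by
  refine sub_nonneg.mp ?_
  rw [prevalence_poisson_sub_bernoulli_eq hk0.ne' (by linarith)]
  have hnum : 0 ≤ k * (1 - 2 * x) + x := add_nonneg (mul_nonneg hk0.le (by linarith)) hx0
  exact div_nonneg (mul_nonneg hx0 hnum) (by positivity)

/-- Poisson equilibrium prevalence dominates Bernoulli equilibrium prevalence. -/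
theorem aP_ge_aB (k x : ℝ) (hk0 : 0 < k) (hk1 : k < 1)
    (hx0 : 0 ≤ x) (hx1 : x ≤ 1 / 2) :
    (k - x) / (k * (1 - x)) ≥ 1 - x * (1 - k * x) / (k * (1 - x) ^ 2) :=
  aP_ge_aB_general k x hk0 hx0 hx1
end

section
/- For 0 < k < 1, 0 ≤ μ < α, the larger eigenvalue of the 2×2 matrix M with M₁₁ = −μ, M₁₂ = λ_B, M₂₁ = σ + μ, M₂₂ = −(λ_B + μ) − (σ + μ), where σ = α − 2μ and λ_B = (σ + μ)k/(1 − k), equals (α − μ)(√(1 + 4k(1-k)) − 1)/(2(1 − k)) − μ. -/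
/-!
A real number `e` is an eigenvalue of `!![a, b; c, d]` exactly when it is a root of the
characteristic polynomial `e ^ 2 - (a + d) e + (a d - b c)`, so the largest eigenvalue is
`(a + d + √((a - d) ^ 2 + 4 b c)) / 2` as soon as the discriminant is nonnegative. For the
Bernoulli matrix, with `β = α - μ` and `λ_B = β k / (1 - k)`, the discriminant is
`(β / (1 - k)) ^ 2 (1 + 4 k (1 - k))`, and the formula reduces to `g_B`.
-/

namespace Matrix

theorem exists_mulVec_eq_smul_iff_det_sub_eq_zero {K n : Type*} [Field K] [Fintype n]
    [DecidableEq n] (M : Matrix n n K) (e : K) :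
    (∃ v, v ≠ 0 ∧ M *ᵥ v = e • v) ↔ (M - e • 1).det = 0 := by
  rw [← exists_mulVec_eq_zero_iff]
  simp only [sub_mulVec, smul_mulVec, one_mulVec, sub_eq_zero]

theorem exists_mulVec_eq_smul_fin_two_iff {K : Type*} [Field K] (a b c d e : K) :
    (∃ v, v ≠ 0 ∧ !![a, b; c, d] *ᵥ v = e • v) ↔ (a - e) * (d - e) - b * c = 0 := by
  have hsub : !![a, b; c, d] - e • 1 = !![a - e, b; c, d - e] := by
    ext i j
    fin_cases i <;> fin_cases j <;> simp
  rw [exists_mulVec_eq_smul_iff_det_sub_eq_zero, hsub, det_fin_two_of]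

theorem isGreatest_eigenvalues_fin_two (a b c d : ℝ) (hdisc : 0 ≤ (a - d) ^ 2 + 4 * b * c) :
    IsGreatest {e | ∃ v, v ≠ 0 ∧ !![a, b; c, d] *ᵥ v = e • v}
      ((a + d + √((a - d) ^ 2 + 4 * b * c)) / 2) := by
  set s := √((a - d) ^ 2 + 4 * b * c)
  have hs : 0 ≤ s := Real.sqrt_nonneg _
  have hdiscrim : discrim 1 (-(a + d)) (a * d - b * c) = s * s := by
    rw [Real.mul_self_sqrt hdisc, discrim]
    ring
  have hroots (e : ℝ) : e ∈ {e | ∃ v, v ≠ 0 ∧ !![a, b; c, d] *ᵥ v = e • v} ↔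
      e = (a + d + s) / 2 ∨ e = (a + d - s) / 2 := by
    have hchar : (a - e) * (d - e) - b * c = 1 * (e * e) + -(a + d) * e + (a * d - b * c) := by
      ring
    rw [Set.mem_ofPred_eq, exists_mulVec_eq_smul_fin_two_iff, hchar,
      quadratic_eq_zero_iff one_ne_zero hdiscrim e, neg_neg, mul_one]
  refine ⟨(hroots _).2 (Or.inl rfl), fun e he => ?_⟩
  rcases (hroots e).1 he with rfl | rfl <;> linarith

end Matrix

theorem bernoulli_eigenvalue_general (k α μ : ℝ) (hk0 : 0 < k) (hk1 : k < 1)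
    (hμα : μ < α) :
    let σ : ℝ := α - 2 * μ
    let lamB : ℝ := (σ + μ) * k / (1 - k)
    let M : Matrix (Fin 2) (Fin 2) ℝ := !![-μ, lamB; σ + μ, -(lamB + μ) - (σ + μ)]
    let gB : ℝ := (α - μ) * (Real.sqrt (1 + 4 * k * (1 - k)) - 1) / (2 * (1 - k)) - μ
    (∃ v : Fin 2 → ℝ, v ≠ 0 ∧ M.mulVec v = gB • v) ∧
      ∀ e : ℝ, (∃ v : Fin 2 → ℝ, v ≠ 0 ∧ M.mulVec v = e • v) → e ≤ gB := by
  intro σ lamB M gB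
  have h1k : 0 < 1 - k := by linarith
  have hdisc : (-μ - (-(lamB + μ) - (σ + μ))) ^ 2 + 4 * lamB * (σ + μ)
      = ((α - μ) / (1 - k)) ^ 2 * (1 + 4 * k * (1 - k)) := by
    simp only [lamB, σ]
    field_simp
    ring
  have hgB : (-μ + (-(lamB + μ) - (σ + μ))
      + √((-μ - (-(lamB + μ) - (σ + μ))) ^ 2 + 4 * lamB * (σ + μ))) / 2 = gB := by
    rw [hdisc, Real.sqrt_mul (sq_nonneg _), Real.sqrt_sq (div_nonneg (by linarith) h1k.le)]
    simp only [gB, lamB, σ]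
    field_simp
    ring
  have hmax := Matrix.isGreatest_eigenvalues_fin_two _ _ _ _
    (hdisc ▸ mul_nonneg (sq_nonneg _) (by nlinarith))
  rw [hgB] at hmax
  exact ⟨hmax.1, fun e he => hmax.2 he⟩

/-- the larger eigenvalue of the coefficient matrix of the Bernoulli
FRS ODE system equals the growth rate g_B. -/
theorem bernoulli_eigenvalue (k α μ : ℝ) (hk0 : 0 < k) (hk1 : k < 1)
    (hμ : 0 ≤ μ) (hμα : μ < α) (hσ : 0 ≤ α - 2 * μ) :
    let σ : ℝ := α - 2 * μ
    let lamB : ℝ := (σ + μ) * k / (1 - k)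
    let M : Matrix (Fin 2) (Fin 2) ℝ := !![-μ, lamB; σ + μ, -(lamB + μ) - (σ + μ)]
    let gB : ℝ := (α - μ) * (Real.sqrt (1 + 4 * k * (1 - k)) - 1) / (2 * (1 - k)) - μ
    (∃ v : Fin 2 → ℝ, v ≠ 0 ∧ M.mulVec v = gB • v) ∧
      ∀ e : ℝ, (∃ v : Fin 2 → ℝ, v ≠ 0 ∧ M.mulVec v = e • v) → e ≤ gB :=
  bernoulli_eigenvalue_general k α μ hk0 hk1 hμα
end

section
/- Let 0 < k < 1, 0 < x ≤ 1/2, α > 0, μ = xα, σ = α − 2μ, λ_B = (σ+μ)k/(1−k), n > 0. If (a, w) with a, w > 0 satisfies 0 = (1 − a/n)λ_B w − μ a and 0 = −(λ_B + μ)w + (σ + μ)(a − w), then a/n = 1 − x(1 − kx)/(k(1 − x)²). -/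
/-!
Eliminating `w`: with `ν = σ + μ` the second condition says `ν a = (λ + μ + ν) w`, so after
multiplying the first condition by `λ + μ + ν` the factor `a ≠ 0` cancels and
`1 - a/n = μ (λ + μ + ν) / (λ ν)`, whatever `w` is. For the Bernoulli rates `ν = α (1 - x)` and
`λ + μ + ν = α (1 - k x) / (1 - k)`, which turns this ratio into `x (1 - k x) / (k (1 - x)²)`.
-/

theorem one_sub_eq_of_logistic_stationary {p lam μ ν a w : ℝ} (ha : a ≠ 0) (hlam : lam ≠ 0)
    (hν : ν ≠ 0) (h₁ : (1 - p) * lam * w - μ * a = 0) (h₂ : -(lam + μ) * w + ν * (a - w) = 0) :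
    1 - p = μ * (lam + μ + ν) / (lam * ν) := by
  have hw : (lam + μ + ν) * w = ν * a := by linear_combination -h₂
  have key : a * ((1 - p) * (lam * ν)) = a * (μ * (lam + μ + ν)) := by
    linear_combination (lam + μ + ν) * h₁ - (1 - p) * lam * hw
  rw [eq_div_iff (mul_ne_zero hlam hν)]
  exact mul_left_cancel₀ ha key

theorem bernoulli_rate_ratio {k x α : ℝ} (hk0 : k ≠ 0) (hk1 : k ≠ 1) (hx1 : x ≠ 1) (hα : α ≠ 0) :
    x * α * ((α - 2 * (x * α) + x * α) * k / (1 - k) + x * α + (α - 2 * (x * α) + x * α)) /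
      ((α - 2 * (x * α) + x * α) * k / (1 - k) * (α - 2 * (x * α) + x * α)) =
      x * (1 - k * x) / (k * (1 - x) ^ 2) := by
  have h1k : 1 - k ≠ 0 := sub_ne_zero.mpr hk1.symm
  have h1x : 1 - x ≠ 0 := sub_ne_zero.mpr hx1.symm
  rw [show α - 2 * (x * α) + x * α = α * (1 - x) by ring]
  field_simp
  ring

theorem bernoulli_equilibrium_general (k x α n a w : ℝ) (hk0 : 0 < k) (hk1 : k < 1)
    (hx1 : x ≤ 1 / 2) (hα : 0 < α)
    (ha : 0 < a) :
    let μ : ℝ := x * α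
    let σ : ℝ := α - 2 * μ
    let lamB : ℝ := (σ + μ) * k / (1 - k)
    (1 - a / n) * lamB * w - μ * a = 0 →
    -(lamB + μ) * w + (σ + μ) * (a - w) = 0 →
    a / n = 1 - x * (1 - k * x) / (k * (1 - x) ^ 2) := by
  intro μ σ lamB h₁ h₂
  have hν : σ + μ ≠ 0 := by
    have : σ + μ = α * (1 - x) := by ring
    rw [this]
    exact mul_ne_zero hα.ne' (by linarith)
  have hlam : lamB ≠ 0 := div_ne_zero (mul_ne_zero hν hk0.ne') (by linarith)
  have h := one_sub_eq_of_logistic_stationary ha.ne' hlam hν h₁ h₂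
  rw [bernoulli_rate_ratio hk0.ne' hk1.ne (by linarith) hα.ne'] at h
  linarith

/-- the stationarity conditions of the logistic mean-field system for
the Bernoulli FRS model imply the closed-form equilibrium prevalence a_B. -/
theorem bernoulli_equilibrium (k x α n a w : ℝ) (hk0 : 0 < k) (hk1 : k < 1)
    (hx0 : 0 < x) (hx1 : x ≤ 1 / 2) (hα : 0 < α) (hn : 0 < n)
    (ha : 0 < a) (hw : 0 < w) :
    let μ : ℝ := x * α
    let σ : ℝ := α - 2 * μ
    let lamB : ℝ := (σ + μ) * k / (1 - k)
    (1 - a / n) * lamB * w - μ * a = 0 →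
    -(lamB + μ) * w + (σ + μ) * (a - w) = 0 →
    a / n = 1 - x * (1 - k * x) / (k * (1 - x) ^ 2) :=
  bernoulli_equilibrium_general k x α n a w hk0 hk1 hx1 hα ha
end
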